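/- arXiv:0812.5063 — 3 statements merged into one kernel-verified Lean document; each statement's English description precedes it below -/
import Mathlib

section
/- Let V be a representation of sl2 (over a field of characteristic zero) and let v be a vector such that e^k v = 0 and f^n v = 0 for some positive integers n, k, where (e,h,f) is the standard sl2-triple. Then the subrepresentation generated by v is finite-dimensional. -/
/-!
Let `W` be the span of the vectors `f^a q(h) e^c v`. The relations `e q(h) = q(h - 2) e`,
`f^a q(h) = q(h + 2a) f^a` and `e f^(m+1) = f^(m+1) e + (m+1) f^m (h - m)` make `W` stable
under `e`, `h`, `f`. For finiteness, `e^c v = 0` for `c ≥ k`, and `f^(n+c)` kills `e^c v`.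
Moreover each `e^c v` is killed by a monic polynomial in `h`: a vector `u` with `e u = 0` and
`f^n u = 0` is killed by `∏_{j<n} (h - j)` (induction on `n`: `e f^(n+1) u = 0` gives
`(n+1) f^n (h - n) u = 0`, and one divides by `n + 1`), and by induction on `k`, if `p(h)` kills
`e v` then `u = p(h + 2) v` is such a vector. So `W` is spanned by finitely many `f^a h^b e^c v`.
-/

open Polynomial

theorem SemiconjBy.aeval {R A : Type*} [CommSemiring R] [Semiring A] [Algebra R A] {a x y : A}
    (hxy : SemiconjBy a x y) (p : R[X]) : SemiconjBy a (aeval x p) (aeval y p) := by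
  induction p using Polynomial.induction_on with
  | C r => rw [aeval_C, aeval_C]; exact (Algebra.commutes r a).symm
  | add p q hp hq => simpa using hp.add_right hq
  | monomial n r ih =>
    rw [pow_succ, ← mul_assoc, map_mul (Polynomial.aeval x) _ X, map_mul (Polynomial.aeval y) _ X,
      aeval_X, aeval_X]
    exact ih.mul_right hxy

theorem Module.End.aeval_apply_mem_span_of_monic {R M : Type*} [CommRing R] [AddCommGroup M]
    [Module R M] {h : Module.End R M} {p : R[X]} (hp : p.Monic) {u : M} (hu : aeval h p u = 0)
    (q : R[X]) :
    aeval h q u ∈ Submodule.span R ((fun i => (h ^ i) u) '' Set.Iio p.natDegree) := by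
  have hmod : aeval h q u = aeval h (q %ₘ p) u := by
    conv_lhs => rw [← modByMonic_add_div q p, mul_comm]
    rw [map_add, map_mul, LinearMap.add_apply, Module.End.mul_apply, hu, map_zero, add_zero]
  by_cases hp1 : p = 1
  · subst hp1
    simp_all
  rw [hmod, aeval_eq_sum_range' (natDegree_modByMonic_lt q hp hp1), LinearMap.sum_apply]
  refine Submodule.sum_mem _ fun i hi => Submodule.smul_mem _ _ (Submodule.subset_span ?_)
  exact ⟨i, Finset.mem_range.mp hi, rfl⟩

namespace Sl2

section Ring

variable {A : Type*} [Ring A] {e h f : A}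

theorem semiconjBy_e_h (hhe : h * e - e * h = 2 • e) : SemiconjBy e h (h - 2) := by
  rw [SemiconjBy, sub_mul, two_mul, ← two_nsmul, ← hhe, sub_sub_cancel]

theorem semiconjBy_f_h (hhf : h * f - f * h = -(2 • f)) : SemiconjBy f h (h + 2) := by
  have h2f : 2 • f = f * h - h * f := by rw [← neg_sub, hhf, neg_neg]
  rw [SemiconjBy, add_mul, two_mul, ← two_nsmul, h2f]
  abel

theorem semiconjBy_f_pow_h (hhf : h * f - f * h = -(2 • f)) (m : ℕ) :
    SemiconjBy (f ^ m) h (h + 2 * m) := by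
  induction m with
  | zero => simp
  | succ m ih =>
    rw [pow_succ']
    have hc : Commute f (2 * m : A) := (Commute.ofNat_right f 2).mul_right (Nat.commute_cast f m)
    refine SemiconjBy.mul_left ?_ ih
    have hsemi := (semiconjBy_f_h hhf).add_right hc
    rwa [show h + 2 + 2 * (m : A) = h + 2 * (m + 1 : ℕ) by rw [Nat.cast_succ, mul_add_one]; abel]
      at hsemi

theorem e_mul_f_pow_succ (hhf : h * f - f * h = -(2 • f)) (hef : e * f - f * e = h) (m : ℕ) :
    e * f ^ (m + 1) = f ^ (m + 1) * e + (m + 1) • (f ^ m * h) - (m * (m + 1)) • f ^ m := by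
  have hef' : e * f = f * e + h := by rw [← hef]; abel
  have hhf' : h * f = f * h - 2 • f := by rw [(semiconjBy_f_h hhf).eq]; noncomm_ring
  induction m with
  | zero => simp [hef']
  | succ m ih =>
    rw [pow_succ, ← mul_assoc, ih, sub_mul, add_mul, mul_assoc, hef', smul_mul_assoc,
      mul_assoc, hhf', smul_mul_assoc]
    simp only [mul_add, mul_sub, ← mul_assoc, ← pow_succ, mul_smul_comm]
    module

end Ring

section Module

variable {K V : Type*} [CommRing K] [AddCommGroup V] [Module K V] {e h f : Module.End K V}

theorem e_aeval_apply (hhe : h * e - e * h = 2 • e) (q : K[X]) (w : V) :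
    e (aeval h q w) = aeval h (q.comp (X - C 2)) (e w) := by
  rw [aeval_comp, show aeval h (X - C (2 : K)) = h - 2 by simp [map_ofNat]]
  exact LinearMap.congr_fun ((semiconjBy_e_h hhe).aeval q) w

theorem f_pow_aeval_apply (hhf : h * f - f * h = -(2 • f)) (a : ℕ) (q : K[X]) (w : V) :
    (f ^ a) (aeval h q w) = aeval h (q.comp (X + C (2 * a : K))) ((f ^ a) w) := by
  rw [aeval_comp, show aeval h (X + C (2 * a : K)) = h + 2 * a by simp [map_ofNat]]
  exact LinearMap.congr_fun ((semiconjBy_f_pow_h hhf a).aeval q) w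

theorem f_pow_succ_apply_e_eq_zero (hhf : h * f - f * h = -(2 • f)) (hef : e * f - f * e = h)
    {m : ℕ} {v : V} (hv : (f ^ m) v = 0) : (f ^ (m + 1)) (e v) = 0 := by
  have hfh : (f ^ m) (h v) = 0 := by
    simpa [hv] using LinearMap.congr_fun (semiconjBy_f_pow_h hhf m).eq v
  have := LinearMap.congr_fun (e_mul_f_pow_succ hhf hef m) v
  simp_all [pow_succ']

theorem f_pow_add_apply_e_pow_eq_zero (hhf : h * f - f * h = -(2 • f))
    (hef : e * f - f * e = h) {n : ℕ} {v : V} (hv : (f ^ n) v = 0) (c : ℕ) :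
    (f ^ (n + c)) ((e ^ c) v) = 0 := by
  induction c with
  | zero => simpa using hv
  | succ c ih =>
    rw [← add_assoc, pow_succ' e, Module.End.mul_apply]
    exact f_pow_succ_apply_e_eq_zero hhf hef ih

/-- By the PBW theorem, this is the `sl₂`-submodule generated by `v`. -/
def pbwSpan (e h f : Module.End K V) (v : V) : Submodule K V :=
  Submodule.span K
    (Set.range fun x : ℕ × K[X] × ℕ => (f ^ x.1) (aeval h x.2.1 ((e ^ x.2.2) v)))

variable {v : V}

theorem f_pow_aeval_e_pow_mem_pbwSpan (a : ℕ) (q : K[X]) (c : ℕ) :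
    (f ^ a) (aeval h q ((e ^ c) v)) ∈ pbwSpan e h f v :=
  Submodule.subset_span ⟨(a, q, c), rfl⟩

theorem mem_pbwSpan_self : v ∈ pbwSpan e h f v := by
  simpa using f_pow_aeval_e_pow_mem_pbwSpan (e := e) (h := h) (f := f) (v := v) 0 1 0

theorem apply_mem_pbwSpan {T : Module.End K V}
    (hT : ∀ (a : ℕ) (q : K[X]) (c : ℕ),
      T ((f ^ a) (aeval h q ((e ^ c) v))) ∈ pbwSpan e h f v) :
    ∀ x ∈ pbwSpan e h f v, T x ∈ pbwSpan e h f v :=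
  Submodule.span_le (p := (pbwSpan e h f v).comap T) |>.mpr (by
    rintro _ ⟨⟨a, q, c⟩, rfl⟩
    exact hT a q c)

theorem f_apply_mem_pbwSpan : ∀ x ∈ pbwSpan e h f v, f x ∈ pbwSpan e h f v :=
  apply_mem_pbwSpan fun a q c => by
    rw [← Module.End.mul_apply, ← pow_succ']
    exact f_pow_aeval_e_pow_mem_pbwSpan (a + 1) q c

theorem h_apply_mem_pbwSpan (hhf : h * f - f * h = -(2 • f)) :
    ∀ x ∈ pbwSpan e h f v, h x ∈ pbwSpan e h f v :=
  apply_mem_pbwSpan fun a q c => by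
    have hcomm := LinearMap.congr_fun (semiconjBy_f_pow_h hhf a).eq (aeval h q ((e ^ c) v))
    have hXq := f_pow_aeval_e_pow_mem_pbwSpan (e := e) (h := h) (f := f) (v := v) a (X * q) c
    rw [map_mul, aeval_X, Module.End.mul_apply, ← Module.End.mul_apply (f ^ a), hcomm,
      Module.End.mul_apply, LinearMap.add_apply] at hXq
    refine (Submodule.add_mem_iff_left _ ?_).mp hXq
    rw [← Nat.cast_ofNat, ← Nat.cast_mul, Module.End.natCast_apply]
    exact Submodule.smul_of_tower_mem _ _ (f_pow_aeval_e_pow_mem_pbwSpan a q c)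

theorem e_apply_mem_pbwSpan (hhe : h * e - e * h = 2 • e) (hhf : h * f - f * h = -(2 • f))
    (hef : e * f - f * e = h) : ∀ x ∈ pbwSpan e h f v, e x ∈ pbwSpan e h f v :=
  apply_mem_pbwSpan fun a q c => by
    have he : e (aeval h q ((e ^ c) v)) = aeval h (q.comp (X - C 2)) ((e ^ (c + 1)) v) := by
      rw [e_aeval_apply hhe, pow_succ', Module.End.mul_apply]
    cases a with
    | zero => simpa [he] using f_pow_aeval_e_pow_mem_pbwSpan 0 (q.comp (X - C 2)) (c + 1)
    | succ m =>
      have hXq := f_pow_aeval_e_pow_mem_pbwSpan (e := e) (h := h) (f := f) (v := v) m (X * q) c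
      rw [map_mul, aeval_X, Module.End.mul_apply] at hXq
      rw [← Module.End.mul_apply, e_mul_f_pow_succ hhf hef m]
      simp only [LinearMap.sub_apply, LinearMap.add_apply, LinearMap.smul_apply,
        Module.End.mul_apply, he]
      exact sub_mem (add_mem (f_pow_aeval_e_pow_mem_pbwSpan _ _ _)
        (Submodule.smul_of_tower_mem _ _ hXq))
        (Submodule.smul_of_tower_mem _ _ (f_pow_aeval_e_pow_mem_pbwSpan _ _ _))

end Module

section CharZero

variable {K V : Type*} [Field K] [CharZero K] [AddCommGroup V] [Module K V]
  {e h f : Module.End K V}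

theorem aeval_prod_X_sub_C_apply_eq_zero (hhe : h * e - e * h = 2 • e)
    (hhf : h * f - f * h = -(2 • f)) (hef : e * f - f * e = h) (n : ℕ) {v : V}
    (hev : e v = 0) (hfv : (f ^ n) v = 0) :
    aeval h (∏ j ∈ Finset.range n, (X - C (j : K))) v = 0 := by
  induction n generalizing v with
  | zero => simpa using hfv
  | succ n ih =>
    set w := h v - (n : K) • v
    have hew : e w = 0 := by
      simpa [w, hev] using LinearMap.congr_fun (semiconjBy_e_h hhe).eq v
    have hfw : (f ^ n) w = 0 := by
      have := LinearMap.congr_fun (e_mul_f_pow_succ hhf hef n) v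
      simp only [Module.End.mul_apply, LinearMap.sub_apply, LinearMap.add_apply,
        LinearMap.smul_apply, hfv, hev, map_zero, zero_add] at this
      have hsmul : ((n + 1 : ℕ) : K) • (f ^ n) w = 0 := by
        rw [← Nat.cast_smul_eq_nsmul K, ← Nat.cast_smul_eq_nsmul K] at this
        rw [map_sub, map_smul, smul_sub, smul_smul, this, Nat.cast_mul, mul_comm]
      exact (smul_eq_zero.mp hsmul).resolve_left (Nat.cast_ne_zero.mpr n.succ_ne_zero)
    rw [Finset.prod_range_succ, map_mul, Module.End.mul_apply, map_sub, aeval_X, aeval_C,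
      LinearMap.sub_apply, Module.algebraMap_end_apply]
    exact ih hew hfw

theorem exists_monic_aeval_apply_eq_zero (hhe : h * e - e * h = 2 • e)
    (hhf : h * f - f * h = -(2 • f)) (hef : e * f - f * e = h) (k : ℕ) {n : ℕ} {v : V}
    (hek : (e ^ k) v = 0) (hfn : (f ^ n) v = 0) : ∃ p : K[X], p.Monic ∧ aeval h p v = 0 := by
  induction k generalizing n v with
  | zero => exact ⟨1, monic_one, by simpa using hek⟩
  | succ k ih =>
    obtain ⟨p, hp, hpv⟩ := ih (v := e v) (by rwa [← Module.End.mul_apply, ← pow_succ])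
      (f_pow_succ_apply_e_eq_zero hhf hef hfn)
    set u := aeval h (p.comp (X + C 2)) v
    have heu : e u = 0 := by
      rwa [e_aeval_apply hhe, comp_assoc, add_comp, X_comp, C_comp, sub_add_cancel, comp_X]
    have hfu : (f ^ n) u = 0 := by rw [f_pow_aeval_apply hhf, hfn, map_zero]
    refine ⟨(∏ j ∈ Finset.range n, (X - C (j : K))) * p.comp (X + C 2),
      (monic_prod_of_monic _ _ fun j _ => monic_X_sub_C _).mul (hp.comp_X_add_C 2), ?_⟩
    rw [map_mul, Module.End.mul_apply]
    exact aeval_prod_X_sub_C_apply_eq_zero hhe hhf hef n heu hfu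

theorem finiteDimensional_pbwSpan (hhe : h * e - e * h = 2 • e)
    (hhf : h * f - f * h = -(2 • f)) (hef : e * f - f * e = h) {k n : ℕ} {v : V}
    (hek : (e ^ k) v = 0) (hfn : (f ^ n) v = 0) : FiniteDimensional K (pbwSpan e h f v) := by
  have hann (c : ℕ) : ∃ p : K[X], p.Monic ∧ aeval h p ((e ^ c) v) = 0 := by
    refine exists_monic_aeval_apply_eq_zero hhe hhf hef k ?_
      (f_pow_add_apply_e_pow_eq_zero hhf hef hfn c)
    rw [← Module.End.mul_apply, ← pow_add]
    exact Module.End.pow_map_zero_of_le (Nat.le_add_right k c) hek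
  choose p hp hpv using hann
  set D := (Finset.range k).sup fun c => (p c).natDegree
  set T := (fun x : ℕ × ℕ × ℕ => (f ^ x.1) ((h ^ x.2.1) ((e ^ x.2.2) v))) ''
    (Set.Iio (n + k) ×ˢ Set.Iio D ×ˢ Set.Iio k)
  have : FiniteDimensional K (Submodule.span K T) := FiniteDimensional.span_of_finite K
    (((Set.finite_Iio _).prod ((Set.finite_Iio _).prod (Set.finite_Iio _))).image _)
  refine Submodule.finiteDimensional_of_le (S₂ := Submodule.span K T) (Submodule.span_le.mpr ?_)
  rintro _ ⟨⟨a, q, c⟩, rfl⟩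
  dsimp only
  obtain hc | hc := lt_or_ge c k
  swap
  · simp [Module.End.pow_map_zero_of_le hc hek]
  obtain ha | ha := lt_or_ge a (n + c)
  swap
  · rw [SetLike.mem_coe, f_pow_aeval_apply hhf,
      Module.End.pow_map_zero_of_le ha (f_pow_add_apply_e_pow_eq_zero hhf hef hfn c), map_zero]
    exact zero_mem _
  refine Submodule.span_mono ?_ (Submodule.apply_mem_span_image_of_mem_span (f ^ a)
    (Module.End.aeval_apply_mem_span_of_monic (hp c) (hpv c) q))
  rintro _ ⟨_, ⟨i, hi, rfl⟩, rfl⟩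
  have hD : (p c).natDegree ≤ D :=
    Finset.le_sup (f := fun c => (p c).natDegree) (Finset.mem_range.mpr hc)
  exact ⟨(a, i, c), ⟨by simp only [Set.mem_Iio] at hi ⊢; omega, hi.trans_le hD, hc⟩, rfl⟩

end CharZero

end Sl2

open Sl2 in
theorem stmt2_general {K V : Type*} [Field K] [CharZero K] [AddCommGroup V] [Module K V]
    (e h f : Module.End K V)
    (hhe : h * e - e * h = 2 • e)
    (hhf : h * f - f * h = -(2 • f))
    (hef : e * f - f * e = h)
    (v : V) (k n : ℕ)
    (hek : (e ^ k) v = 0) (hfn : (f ^ n) v = 0) :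
    ∃ W : Submodule K V, v ∈ W ∧ (∀ x ∈ W, e x ∈ W) ∧ (∀ x ∈ W, h x ∈ W) ∧
      (∀ x ∈ W, f x ∈ W) ∧ FiniteDimensional K W :=
  ⟨pbwSpan e h f v, mem_pbwSpan_self, e_apply_mem_pbwSpan hhe hhf hef, h_apply_mem_pbwSpan hhf,
    f_apply_mem_pbwSpan, finiteDimensional_pbwSpan hhe hhf hef hek hfn⟩

/-- If v is a vector in an sl2-representation with e^k v = 0 and f^n v = 0
for some positive integers k, n, then the subrepresentation generated by v is
finite-dimensional (i.e. v lies in some finite-dimensional invariant submodule). -/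
theorem stmt2 {K V : Type*} [Field K] [CharZero K] [AddCommGroup V] [Module K V]
    (e h f : Module.End K V)
    (hhe : h * e - e * h = 2 • e)
    (hhf : h * f - f * h = -(2 • f))
    (hef : e * f - f * e = h)
    (v : V) (k n : ℕ) (hk : 0 < k) (hn : 0 < n)
    (hek : (e ^ k) v = 0) (hfn : (f ^ n) v = 0) :
    ∃ W : Submodule K V, v ∈ W ∧ (∀ x ∈ W, e x ∈ W) ∧ (∀ x ∈ W, h x ∈ W) ∧
      (∀ x ∈ W, f x ∈ W) ∧ FiniteDimensional K W :=
  stmt2_general e h f hhe hhf hef v k n hek hfn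
end

section
/- Let G be a group with an involutive automorphism θ, let H = G^θ, and define σ(g) = θ(g)^{-1}. Then any (H × H)-orbit O (under the two-sided action (h1,h2)·g = h1 g h2^{-1}) satisfying σ(O) = O contains a normal element, i.e. an element g such that g commutes with σ(g). -/
/-- Let G be a group with involution θ, H = G^θ, σ(g) = θ(g)⁻¹.
Any (H × H)-orbit O for the two-sided action which is σ-invariant contains a normal
element, i.e. an element g with g·σ(g) = σ(g)·g. -/
theorem stmt5 {G : Type*} [Group G]
    (θ : G →* G) (hθ : ∀ g, θ (θ g) = g)
    (σ : G → G) (hσ : ∀ g, σ g = (θ g)⁻¹)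
    (g0 : G) (O : Set G)
    (hO : O = {x | ∃ h1 h2 : G, θ h1 = h1 ∧ θ h2 = h2 ∧ x = h1 * g0 * h2⁻¹})
    (hinv : σ '' O = O) :
    ∃ g ∈ O, g * σ g = σ g * g := by
  have hg0 : g0 ∈ O := by
    rw [hO]; exact ⟨1, 1, map_one θ, map_one θ, by group⟩
  have hσg0 : σ g0 ∈ O := hinv ▸ ⟨g0, hg0, rfl⟩
  rw [hO] at hσg0
  obtain ⟨h1, h2, hh1, hh2, heq⟩ := hσg0
  -- heq : σ g0 = h1 * g0 * h2⁻¹, i.e. (θ g0)⁻¹ = h1 * g0 * h2⁻¹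
  rw [hσ] at heq
  -- apply θ: g0⁻¹ = h1 * θ g0 * h2⁻¹
  have heq2 : g0⁻¹ = h1 * θ g0 * h2⁻¹ := by
    have := congrArg θ heq
    rwa [map_inv, hθ, map_mul, map_mul, map_inv, hh1, hh2] at this
  -- hence (θ g0)⁻¹ = h2⁻¹ * g0 * h1
  have key : (θ g0)⁻¹ = h2⁻¹ * g0 * h1 := by
    have : θ g0 = h1⁻¹ * g0⁻¹ * h2 := by
      rw [heq2]; group
    rw [this]; group
  refine ⟨h1 * g0, ?_, ?_⟩
  · rw [hO]; exact ⟨h1, 1, hh1, map_one θ, by group⟩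
  · have hσg : σ (h1 * g0) = h2⁻¹ * g0 := by
      rw [hσ, map_mul, hh1, mul_inv_rev, key]
      group
    rw [hσg]
    calc h1 * g0 * (h2⁻¹ * g0) = (h1 * g0 * h2⁻¹) * g0 := by group
      _ = (h2⁻¹ * g0 * h1) * g0 := by rw [← heq, key]
      _ = h2⁻¹ * g0 * (h1 * g0) := by group
end

section
/- Every irreducible finite-dimensional Z/2Z-graded representation of sl2 (with the grading on sl2 given by h even and e, f odd) is irreducible as an ungraded representation of sl2. -/
/-! A nonzero invariant subspace `W` contains a primitive vector `w` (`e w = 0`,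
`h w = n • w`, `n : ℕ`), found using that `e` and `f` are nilpotent; its `f`-string spans an
`(n + 1)`-dimensional subspace of `W`. A nonzero homogeneous component `x` of `w` is again
primitive of weight `n`, and its `f`-string spans a graded invariant subspace, hence all of `V`.
So `dim V ≤ n + 1 ≤ dim W`. -/

variable {K V : Type*} [Field K] [AddCommGroup V] [Module K V]

/-- An sl2-triple of linear endomorphisms: [h,e]=2e, [h,f]=-2f, [e,f]=h. -/
def Sl2Rel (e h f : Module.End K V) : Prop :=
  h * e - e * h = 2 • e ∧ h * f - f * h = -(2 • f) ∧ e * f - f * e = h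

/-- A submodule invariant under the sl2-action. -/
def Sl2Inv (e h f : Module.End K V) (W : Submodule K V) : Prop :=
  (∀ x ∈ W, e x ∈ W) ∧ (∀ x ∈ W, h x ∈ W) ∧ (∀ x ∈ W, f x ∈ W)

/-- A Z/2Z-grading V = V0 ⊕ V1 compatible with the graded sl2 (h even, e and f odd). -/
def Sl2Grading (e h f : Module.End K V) (V0 V1 : Submodule K V) : Prop :=
  IsCompl V0 V1 ∧ (∀ x ∈ V0, h x ∈ V0) ∧ (∀ x ∈ V1, h x ∈ V1) ∧
    (∀ x ∈ V0, e x ∈ V1) ∧ (∀ x ∈ V1, e x ∈ V0) ∧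
    (∀ x ∈ V0, f x ∈ V1) ∧ (∀ x ∈ V1, f x ∈ V0)

/-- A submodule which is graded with respect to the grading (V0, V1). -/
def Sl2GradedSub (V0 V1 W : Submodule K V) : Prop :=
  W = (W ⊓ V0) ⊔ (W ⊓ V1)

theorem isNilpotent_of_mul_sub_mul_eq_smul {A : Type*} [CharZero K] [Ring A] [Algebra K A]
    [FiniteDimensional K A] {a x : A} {c : K} (hc : c ≠ 0) (hx : a * x - x * a = c • x) :
    IsNilpotent x := by
  have hpow : ∀ m : ℕ, a * x ^ m - x ^ m * a = ((m : K) * c) • x ^ m := by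
    intro m
    induction m with
    | zero => simp
    | succ m ih =>
      calc a * x ^ (m + 1) - x ^ (m + 1) * a
          = (a * x ^ m - x ^ m * a) * x + x ^ m * (a * x - x * a) := by noncomm_ring
        _ = (((m + 1 : ℕ) : K) * c) • x ^ (m + 1) := by
          rw [ih, hx, smul_mul_assoc, mul_smul_comm, ← pow_succ, ← add_smul]
          push_cast
          ring_nf
  by_contra hnil
  have hne : ∀ m : ℕ, x ^ m ≠ 0 := fun m hm => hnil ⟨m, hm⟩
  have hli := Module.End.eigenvectors_linearIndependent'
    (LinearMap.mulLeft K a - LinearMap.mulRight K a)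
    (fun m : ℕ => (m : K) * c) (fun m n hmn => by simpa [hc] using hmn) (fun m => x ^ m)
    (fun m => ⟨Module.End.mem_eigenspace_iff.2 (hpow m), hne m⟩)
  have := hli.finite_of_isNoetherian
  exact not_finite ℕ

lemma IsNilpotent.exists_mem_ne_zero_apply_eq_zero {T : Module.End K V} {W : Submodule K V}
    (hT : IsNilpotent T) (hW : ∀ x ∈ W, T x ∈ W) (hW0 : W ≠ ⊥) :
    ∃ z ∈ W, z ≠ 0 ∧ T z = 0 := by
  obtain ⟨y, hyW, hy0⟩ := (Submodule.ne_bot_iff W).1 hW0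
  obtain ⟨M, hM⟩ := hT
  obtain ⟨k, hk, hk1⟩ := Nat.exists_not_and_succ_of_not_zero_of_exists
    (p := fun k => (T ^ k) y = 0) (by simpa using hy0) ⟨M, by simp [hM]⟩
  refine ⟨(T ^ k) y, Module.End.pow_apply_mem_of_forall_mem k hW y hyW, hk, ?_⟩
  rwa [← Module.End.mul_apply, ← pow_succ']

structure IsPrimitiveVector (e h : Module.End K V) (x : V) (μ : K) : Prop where
  ne_zero : x ≠ 0
  apply_e : e x = 0
  apply_h : h x = μ • x

def fStringSpan (f : Module.End K V) (x : V) (n : ℕ) : Submodule K V :=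
  Submodule.span K (Set.range fun i : Fin (n + 1) => (f ^ (i : ℕ)) x)

namespace Sl2Rel

variable {e h f : Module.End K V}

lemma e_h_apply (hrel : Sl2Rel e h f) (x : V) : e (h x) = h (e x) - (2 : K) • e x := by
  have := LinearMap.congr_fun hrel.1 x
  simp only [LinearMap.sub_apply, Module.End.mul_apply, LinearMap.smul_apply] at this
  linear_combination (norm := module) -this

lemma h_f_apply (hrel : Sl2Rel e h f) (x : V) : h (f x) = f (h x) - (2 : K) • f x := by
  have := LinearMap.congr_fun hrel.2.1 x
  simp only [LinearMap.sub_apply, Module.End.mul_apply, LinearMap.neg_apply,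
    LinearMap.smul_apply] at this
  linear_combination (norm := module) this

lemma e_f_apply (hrel : Sl2Rel e h f) (x : V) : e (f x) = f (e x) + h x := by
  rw [← LinearMap.congr_fun hrel.2.2 x]
  simp

lemma h_f_pow_apply (hrel : Sl2Rel e h f) (x : V) (k : ℕ) :
    h ((f ^ k) x) = (f ^ k) (h x) - (2 * k : K) • (f ^ k) x := by
  induction k with
  | zero => simp
  | succ k ih =>
    rw [pow_succ', Module.End.mul_apply, Module.End.mul_apply, hrel.h_f_apply, ih, map_sub,
      map_smul]
    push_cast
    module

lemma e_f_pow_succ_apply (hrel : Sl2Rel e h f) {x : V} (he : e x = 0) (k : ℕ) :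
    e ((f ^ (k + 1)) x) = ((k : K) + 1) • (f ^ k) (h x - (k : K) • x) := by
  induction k with
  | zero => simp [hrel.e_f_apply, he]
  | succ k ih =>
    rw [pow_succ', Module.End.mul_apply, hrel.e_f_apply, ih, hrel.h_f_pow_apply, pow_succ',
      Module.End.mul_apply, Module.End.mul_apply]
    simp only [map_sub, map_smul]
    push_cast
    module

lemma isNilpotent_e [CharZero K] [FiniteDimensional K V] (hrel : Sl2Rel e h f) :
    IsNilpotent e :=
  isNilpotent_of_mul_sub_mul_eq_smul (a := h) (two_ne_zero (α := K))
    (by rw [hrel.1, two_smul, two_smul])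

lemma isNilpotent_f [CharZero K] [FiniteDimensional K V] (hrel : Sl2Rel e h f) :
    IsNilpotent f :=
  isNilpotent_of_mul_sub_mul_eq_smul (a := h) (neg_ne_zero.2 (two_ne_zero (α := K)))
    (by rw [hrel.2.1, neg_smul, two_smul, two_smul])

/-- If `e z = 0` and `f ^ (m + 1) z = 0`, then either `h z = m • z` or `(h - m) z` is again killed
by `e` and by `f ^ m`. -/
lemma exists_isPrimitiveVector_of_pow_f_apply_eq_zero [CharZero K] {W : Submodule K V}
    (hrel : Sl2Rel e h f) (hW : ∀ x ∈ W, h x ∈ W)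
    (m : ℕ) {z : V} (hzW : z ∈ W) (hz0 : z ≠ 0) (hze : e z = 0) (hzf : (f ^ m) z = 0) :
    ∃ (n : ℕ) (w : V), w ∈ W ∧ IsPrimitiveVector e h w n := by
  induction m generalizing z with
  | zero => exact absurd (by simpa using hzf) hz0
  | succ m ih =>
    by_cases hz : h z - (m : K) • z = 0
    · exact ⟨m, z, hzW, hz0, hze, sub_eq_zero.1 hz⟩
    refine ih (W.sub_mem (hW z hzW) (W.smul_mem _ hzW)) hz ?_ ?_
    · simp [hrel.e_h_apply, hze]
    · have := hrel.e_f_pow_succ_apply hze m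
      rw [hzf, map_zero, eq_comm, smul_eq_zero] at this
      exact this.resolve_left (Nat.cast_add_one_ne_zero m)

lemma exists_isPrimitiveVector_mem [CharZero K] [FiniteDimensional K V] {W : Submodule K V}
    (hrel : Sl2Rel e h f) (hW : Sl2Inv e h f W) (hW0 : W ≠ ⊥) :
    ∃ (n : ℕ) (w : V), w ∈ W ∧ IsPrimitiveVector e h w n := by
  obtain ⟨z, hzW, hz0, hze⟩ := hrel.isNilpotent_e.exists_mem_ne_zero_apply_eq_zero hW.1 hW0
  obtain ⟨M, hM⟩ := hrel.isNilpotent_f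
  exact hrel.exists_isPrimitiveVector_of_pow_f_apply_eq_zero hW.2.1 M hzW hz0 hze (by simp [hM])

end Sl2Rel

namespace IsPrimitiveVector

variable {e h f : Module.End K V} {x : V} {μ : K}

lemma h_f_pow_apply (hrel : Sl2Rel e h f) (hx : IsPrimitiveVector e h x μ) (k : ℕ) :
    h ((f ^ k) x) = (μ - 2 * k) • (f ^ k) x := by
  rw [hrel.h_f_pow_apply, hx.apply_h, map_smul, sub_smul]

lemma e_f_pow_succ_apply (hrel : Sl2Rel e h f) (hx : IsPrimitiveVector e h x μ) (k : ℕ) :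
    e ((f ^ (k + 1)) x) = (((k : K) + 1) * (μ - k)) • (f ^ k) x := by
  rw [hrel.e_f_pow_succ_apply hx.apply_e, hx.apply_h, ← sub_smul, map_smul, smul_smul]

variable [CharZero K] [FiniteDimensional K V]

lemma pow_f_apply_ne_zero_and_eq_zero {n : ℕ} (hrel : Sl2Rel e h f)
    (hx : IsPrimitiveVector e h x n) : (f ^ n) x ≠ 0 ∧ (f ^ (n + 1)) x = 0 := by
  obtain ⟨M, hM⟩ := hrel.isNilpotent_f
  obtain ⟨k, hk, hk1⟩ := Nat.exists_not_and_succ_of_not_zero_of_exists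
    (p := fun k => (f ^ k) x = 0) (by simpa using hx.ne_zero) ⟨M, by simp [hM]⟩
  have hkn : ((k : K) + 1) * ((n : K) - k) = 0 := by
    by_contra hne
    have := hx.e_f_pow_succ_apply hrel k
    rw [hk1, map_zero, eq_comm, smul_eq_zero] at this
    exact this.elim hne hk
  obtain rfl : n = k := by
    rw [mul_eq_zero, sub_eq_zero, Nat.cast_inj] at hkn
    exact hkn.resolve_left (Nat.cast_add_one_ne_zero k)
  exact ⟨hk, hk1⟩

lemma linearIndependent_pow_f_apply {n : ℕ} (hrel : Sl2Rel e h f)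
    (hx : IsPrimitiveVector e h x n) :
    LinearIndependent K fun i : Fin (n + 1) => (f ^ (i : ℕ)) x := by
  refine h.eigenvectors_linearIndependent' (fun i : Fin (n + 1) => (n : K) - 2 * (i : ℕ))
    (fun i j hij => Fin.ext (by simpa using hij)) _ fun i => ⟨?_, fun h0 => ?_⟩
  · exact Module.End.mem_eigenspace_iff.2 (hx.h_f_pow_apply hrel i)
  · apply (hx.pow_f_apply_ne_zero_and_eq_zero hrel).1
    rw [← Nat.sub_add_cancel (Nat.lt_succ_iff.1 i.2), pow_add, Module.End.mul_apply, h0, map_zero]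

lemma finrank_fStringSpan {n : ℕ} (hrel : Sl2Rel e h f) (hx : IsPrimitiveVector e h x n) :
    Module.finrank K (fStringSpan f x n) = n + 1 := by
  rw [fStringSpan, finrank_span_eq_card (hx.linearIndependent_pow_f_apply hrel), Fintype.card_fin]

lemma sl2Inv_fStringSpan {n : ℕ} (hrel : Sl2Rel e h f) (hx : IsPrimitiveVector e h x n) :
    Sl2Inv e h f (fStringSpan f x n) := by
  set S := fStringSpan f x n
  have mem : ∀ i ≤ n, (f ^ i) x ∈ S := fun i hi =>
    Submodule.subset_span ⟨⟨i, Nat.lt_succ_of_le hi⟩, rfl⟩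
  have of_gen (T : Module.End K V) (hT : ∀ i ≤ n, T ((f ^ i) x) ∈ S) :
      ∀ y ∈ S, T y ∈ S :=
    (Submodule.span_le (p := S.comap T)).2 <| Set.range_subset_iff.2 fun i =>
      hT i (Nat.lt_succ_iff.1 i.2)
  refine ⟨of_gen e fun i hi => ?_, of_gen h fun i hi => ?_, of_gen f fun i hi => ?_⟩
  · cases i with
    | zero => simp [hx.apply_e]
    | succ i => rw [hx.e_f_pow_succ_apply hrel]; exact S.smul_mem _ (mem i (by omega))
  · rw [hx.h_f_pow_apply hrel]; exact S.smul_mem _ (mem i hi)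
  · rw [← Module.End.mul_apply, ← pow_succ']
    rcases hi.lt_or_eq with hi | rfl
    · exact mem (i + 1) hi
    · rw [(hx.pow_f_apply_ne_zero_and_eq_zero hrel).2]; exact S.zero_mem

end IsPrimitiveVector

lemma fStringSpan_le {f : Module.End K V} {W : Submodule K V} {x : V} (hx : x ∈ W)
    (hf : ∀ y ∈ W, f y ∈ W) (n : ℕ) : fStringSpan f x n ≤ W :=
  Submodule.span_le.2 <| Set.range_subset_iff.2 fun _ =>
    Module.End.pow_apply_mem_of_forall_mem _ hf x hx

lemma sl2GradedSub_span {V0 V1 : Submodule K V} {s : Set V} (hs : s ⊆ V0 ∪ V1) :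
    Sl2GradedSub V0 V1 (Submodule.span K s) := by
  refine le_antisymm (Submodule.span_le.2 fun y hy => ?_) (sup_le inf_le_left inf_le_left)
  rcases hs hy with h0 | h1
  · exact Submodule.mem_sup_left ⟨Submodule.subset_span hy, h0⟩
  · exact Submodule.mem_sup_right ⟨Submodule.subset_span hy, h1⟩

namespace Sl2Grading

variable {e h f : Module.End K V} {V0 V1 : Submodule K V}

lemma pow_f_apply_mem_union (hgr : Sl2Grading e h f V0 V1) {x : V}
    (hx : x ∈ (V0 : Set V) ∪ V1) (k : ℕ) : (f ^ k) x ∈ (V0 : Set V) ∪ V1 := by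
  induction k with
  | zero => simpa using hx
  | succ k ih =>
    rw [pow_succ', Module.End.mul_apply]
    rcases ih with h0 | h1
    · exact Or.inr (hgr.2.2.2.2.2.1 _ h0)
    · exact Or.inl (hgr.2.2.2.2.2.2 _ h1)

lemma exists_isPrimitiveVector_mem_union (hgr : Sl2Grading e h f V0 V1) {w : V} {μ : K}
    (hw : IsPrimitiveVector e h w μ) :
    ∃ x ∈ (V0 : Set V) ∪ V1, IsPrimitiveVector e h x μ := by
  obtain ⟨hcompl, hh0, hh1, he0, he1, -⟩ := hgr
  obtain ⟨a, b, ha, hb, rfl⟩ := Submodule.codisjoint_iff_exists_add_eq.1 hcompl.codisjoint w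
  have split {x y : V} := Submodule.disjoint_iff_add_eq_zero.1 hcompl.disjoint (x := x) (y := y)
  obtain ⟨heb, hea⟩ := split (he1 b hb) (he0 a ha) (by rw [add_comm, ← map_add, hw.apply_e])
  obtain ⟨hha, hhb⟩ := split (V0.sub_mem (hh0 a ha) (V0.smul_mem μ ha))
    (V1.sub_mem (hh1 b hb) (V1.smul_mem μ hb))
    (by rw [sub_add_sub_comm, ← map_add, ← smul_add, hw.apply_h, sub_self])
  by_cases ha0 : a = 0
  · exact ⟨b, Or.inr hb, fun hb0 => hw.ne_zero (by rw [ha0, hb0, add_zero]), heb,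
      sub_eq_zero.1 hhb⟩
  · exact ⟨a, Or.inl ha, ha0, hea, sub_eq_zero.1 hha⟩

end Sl2Grading

theorem stmt7_general {K V : Type*} [Field K] [CharZero K] [AddCommGroup V] [Module K V]
    [FiniteDimensional K V]
    (e h f : Module.End K V) (hrel : Sl2Rel e h f)
    (V0 V1 : Submodule K V) (hgr : Sl2Grading e h f V0 V1)
    (hirr : ∀ W : Submodule K V, Sl2Inv e h f W → Sl2GradedSub V0 V1 W →
      W = ⊥ ∨ W = ⊤) :
    ∀ W : Submodule K V, Sl2Inv e h f W → W = ⊥ ∨ W = ⊤ := by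
  intro W hW
  refine or_iff_not_imp_left.2 fun hW0 => ?_
  obtain ⟨n, w, hwW, hw⟩ := hrel.exists_isPrimitiveVector_mem hW hW0
  obtain ⟨x, hx01, hx⟩ := hgr.exists_isPrimitiveVector_mem_union hw
  have hxV : fStringSpan f x n = ⊤ := by
    refine (hirr _ (hx.sl2Inv_fStringSpan hrel) (sl2GradedSub_span ?_)).resolve_left ?_
    · rintro _ ⟨i, rfl⟩
      exact hgr.pow_f_apply_mem_union hx01 i
    · exact (Submodule.ne_bot_iff _).2 ⟨x, Submodule.subset_span ⟨0, by simp⟩, hx.ne_zero⟩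
  refine Submodule.eq_top_of_finrank_eq (le_antisymm (Submodule.finrank_le W) ?_)
  calc Module.finrank K V = Module.finrank K (fStringSpan f x n) := by rw [hxV, finrank_top]
    _ = n + 1 := hx.finrank_fStringSpan hrel
    _ = Module.finrank K (fStringSpan f w n) := (hw.finrank_fStringSpan hrel).symm
    _ ≤ Module.finrank K W := Submodule.finrank_mono (fStringSpan_le hwW hW.2.2 n)

/-- Every irreducible finite-dimensional Z/2Z-graded representation of sl2
(h even, e and f odd) is irreducible as an ungraded representation. -/
theorem stmt7 {K V : Type*} [Field K] [CharZero K] [AddCommGroup V] [Module K V]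
    [FiniteDimensional K V] [Nontrivial V]
    (e h f : Module.End K V) (hrel : Sl2Rel e h f)
    (V0 V1 : Submodule K V) (hgr : Sl2Grading e h f V0 V1)
    (hirr : ∀ W : Submodule K V, Sl2Inv e h f W → Sl2GradedSub V0 V1 W →
      W = ⊥ ∨ W = ⊤) :
    ∀ W : Submodule K V, Sl2Inv e h f W → W = ⊥ ∨ W = ⊤ :=
  stmt7_general e h f hrel V0 V1 hgr hirr
end
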